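/- Let F₀, s : ℝ² → ℝ be real analytic with ∂F₀/∂H₂(0) ≠ 0. Then there exists ρ₀ > 0 such that for all radii 0 < ρ₁ < ρ₂ ≤ ρ₀, the frequency map ω = (ω₁, ω₂) is injective on the slit annulus V_* = {H ∈ P : ρ₁ < |H| < ρ₂}. -/

import Mathlib

open Real Filter Topology MeasureTheory

/-- The Euclidean norm `|H| = √(H₁² + H₂²)` on `ℝ²`. -/
noncomputable def nrm (H : ℝ × ℝ) : ℝ := Real.sqrt (H.1 ^ 2 + H.2 ^ 2)

/-- The slit plane `P = ℝ² \ {(t,0) : t ≥ 0}`. -/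
def slitP : Set (ℝ × ℝ) := {H | ¬ (0 ≤ H.1 ∧ H.2 = 0)}

/-- The branch of the polar angle with values in `(0, 2π)` on the slit plane:
`argS (r cos θ, r sin θ) = θ` for `r > 0`, `θ ∈ (0, 2π)`. -/
noncomputable def argS (H : ℝ × ℝ) : ℝ :=
  Real.pi + Complex.arg (-(H.1 + H.2 * Complex.I))

/-- The partial derivative with respect to the first variable. -/
noncomputable def pd₁ (f : ℝ × ℝ → ℝ) (H : ℝ × ℝ) : ℝ := fderiv ℝ f H (1, 0)

/-- The partial derivative with respect to the second variable. -/
noncomputable def pd₂ (f : ℝ × ℝ → ℝ) (H : ℝ × ℝ) : ℝ := fderiv ℝ f H (0, 1)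

/-- `D(H) = (1/(2π))(ln|H| + 1) + ∂s/∂H₂(H)`. -/
noncomputable def Dfun (s : ℝ × ℝ → ℝ) (H : ℝ × ℝ) : ℝ :=
  (1 / (2 * Real.pi)) * (Real.log (nrm H) + 1) + pd₂ s H

/-- First component of the frequency map. -/
noncomputable def ω₁ (F₀ s : ℝ × ℝ → ℝ) (H : ℝ × ℝ) : ℝ :=
  pd₁ F₀ H - pd₂ F₀ H * ((1 / (2 * Real.pi)) * argS H + pd₁ s H) / Dfun s H

/-- Second component of the frequency map. -/
noncomputable def ω₂ (F₀ s : ℝ × ℝ → ℝ) (H : ℝ × ℝ) : ℝ :=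
  pd₂ F₀ H / Dfun s H

/-! ### Auxiliary lemmas -/

lemma aux_cos_lip (x y : ℝ) : |Real.cos x - Real.cos y| ≤ |x - y| := by
  rw [Real.cos_sub_cos]
  have h1 : |Real.sin ((x+y)/2)| ≤ 1 := abs_sin_le_one _
  have h2 : |Real.sin ((x-y)/2)| ≤ |(x-y)/2| := abs_sin_le_abs
  calc |(-2) * Real.sin ((x+y)/2) * Real.sin ((x-y)/2)|
      = 2 * (|Real.sin ((x+y)/2)| * |Real.sin ((x-y)/2)|) := by
        rw [abs_mul, abs_mul]; norm_num; ring
    _ ≤ 2 * (1 * |(x-y)/2|) := by gcongr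
    _ = |x - y| := by rw [abs_div, abs_two]; ring

lemma aux_sin_lip (x y : ℝ) : |Real.sin x - Real.sin y| ≤ |x - y| := by
  rw [Real.sin_sub_sin]
  have h1 : |Real.cos ((x+y)/2)| ≤ 1 := abs_cos_le_one _
  have h2 : |Real.sin ((x-y)/2)| ≤ |(x-y)/2| := abs_sin_le_abs
  calc |2 * Real.sin ((x-y)/2) * Real.cos ((x+y)/2)|
      = 2 * (|Real.sin ((x-y)/2)| * |Real.cos ((x+y)/2)|) := by
        rw [abs_mul, abs_mul]; norm_num; ring
    _ ≤ 2 * (|(x-y)/2| * 1) := by gcongr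
    _ = |x - y| := by rw [abs_div, abs_two]; ring

lemma aux_pd_analytic (f : ℝ × ℝ → ℝ) (hf : ∀ x, AnalyticAt ℝ f x) (v : ℝ × ℝ) :
    ∀ x, AnalyticAt ℝ (fun H => fderiv ℝ f H v) x := by
  intro x
  have hA : AnalyticOnNhd ℝ f Set.univ := fun y _ => hf y
  have hd : AnalyticAt ℝ (fderiv ℝ f) x := hA.fderiv x (Set.mem_univ x)
  exact ((ContinuousLinearMap.apply ℝ ℝ v).analyticAt _).comp hd

lemma aux_lip_of_analytic (g : ℝ × ℝ → ℝ) (hg : ∀ x, AnalyticAt ℝ g x) :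
    ∃ L : ℝ, 1 ≤ L ∧ ∀ x y : ℝ × ℝ, ‖x‖ ≤ 1 → ‖y‖ ≤ 1 → |g x - g y| ≤ L * ‖x - y‖ := by
  have hA : AnalyticOnNhd ℝ g Set.univ := fun y _ => hg y
  have hd : Continuous (fderiv ℝ g) :=
    continuous_iff_continuousAt.2 fun y => ((hA.fderiv y (Set.mem_univ y)).continuousAt)
  obtain ⟨C, hC⟩ := (isCompact_closedBall (0 : ℝ × ℝ) 1).exists_bound_of_continuousOn
    (hd.continuousOn (s := Metric.closedBall 0 1))
  refine ⟨max C 1, le_max_right _ _, fun x y hx hy => ?_⟩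
  have := Convex.norm_image_sub_le_of_norm_fderiv_le
    (f := g) (C := max C 1) (s := Metric.closedBall (0:ℝ×ℝ) 1)
    (fun z _ => (hg z).differentiableAt)
    (fun z hz => le_trans (hC z hz) (le_max_left _ _))
    (convex_closedBall _ _) (mem_closedBall_zero_iff.2 hy) (mem_closedBall_zero_iff.2 hx)
  simpa [Real.norm_eq_abs] using this

lemma aux_slit_decomp (H : ℝ × ℝ) (hH : H ∈ slitP) :
    0 < nrm H ∧ H.1 = nrm H * Real.cos (argS H) ∧ H.2 = nrm H * Real.sin (argS H) := by
  set z : ℂ := (H.1 + H.2 * Complex.I) with hz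
  have hre : z.re = H.1 := by simp [hz]
  have him : z.im = H.2 := by simp [hz]
  have hz0 : z ≠ 0 := by
    intro h
    apply hH
    constructor
    · rw [← hre, h]; simp
    · rw [← him, h]; simp
  have habs : ‖z‖ = nrm H := by
    rw [Complex.norm_def, Complex.normSq_apply, nrm, hre, him]
    ring_nf
  have hpos : 0 < nrm H := by
    rw [← habs]; exact norm_pos_iff.2 hz0
  have hnz : -z ≠ 0 := neg_ne_zero.2 hz0
  have habs' : ‖-z‖ = nrm H := by rw [norm_neg]; exact habs
  have hcos : Real.cos (argS H) = H.1 / nrm H := by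
    rw [argS, Real.cos_add]
    simp only [Real.cos_pi, Real.sin_pi]
    rw [Complex.cos_arg hnz, habs']
    simp [hre]
    ring
  have hsin : Real.sin (argS H) = H.2 / nrm H := by
    rw [argS, Real.sin_add]
    simp only [Real.cos_pi, Real.sin_pi]
    rw [Complex.sin_arg, habs']
    simp [him]
    ring
  refine ⟨hpos, ?_, ?_⟩
  · rw [hcos]; field_simp
  · rw [hsin]; field_simp

lemma aux_norm_le_nrm (H : ℝ × ℝ) : ‖H‖ ≤ nrm H := by
  rw [Prod.norm_def]
  apply max_le
  · rw [Real.norm_eq_abs, ← Real.sqrt_sq_eq_abs]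
    exact Real.sqrt_le_sqrt (by nlinarith [sq_nonneg H.2])
  · rw [Real.norm_eq_abs, ← Real.sqrt_sq_eq_abs]
    exact Real.sqrt_le_sqrt (by nlinarith [sq_nonneg H.1])

lemma aux_radial_bound (r r' : ℝ) (hr : 0 < r) (hr' : 0 < r') :
    |r - r'| ≤ max r r' * |Real.log r - Real.log r'| := by
  have key : ∀ u v : ℝ, 0 < u → 0 < v → u ≤ v →
      |u - v| ≤ max u v * |Real.log u - Real.log v| := by
    intro u v hu hv huv
    have hlog : Real.log u ≤ Real.log v := Real.log_le_log hu huv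
    have hkey : Real.log (u / v) ≤ u / v - 1 := Real.log_le_sub_one_of_pos (div_pos hu hv)
    rw [Real.log_div hu.ne' hv.ne'] at hkey
    rw [abs_of_nonpos (by linarith), abs_of_nonpos (by linarith), max_eq_right huv]
    have h2 : v * (Real.log u - Real.log v) ≤ v * (u / v - 1) :=
      mul_le_mul_of_nonneg_left hkey hv.le
    have h3 : v * (u / v - 1) = u - v := by field_simp
    nlinarith
  rcases le_total r r' with h | h
  · exact key r r' hr hr' h
  · have := key r' r hr' hr h
    rw [abs_sub_comm, abs_sub_comm (Real.log r), max_comm]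
    exact this

lemma aux_mono_decay (T m : ℝ) (hT : 0 ≤ T) (hm : T ≤ m) :
    (1 + m) * Real.exp (-m) ≤ (1 + T) * Real.exp (-T) := by
  have h1 : 1 + (m - T) ≤ Real.exp (m - T) := by
    have := Real.add_one_le_exp (m - T); linarith
  have h2 : Real.exp (-m) * Real.exp (m - T) = Real.exp (-T) := by
    rw [← Real.exp_add]; ring_nf
  have h3 : (0:ℝ) < Real.exp (-m) := Real.exp_pos _
  calc (1 + m) * Real.exp (-m) ≤ (1 + T) * ((1 + (m - T)) * Real.exp (-m)) := by
        nlinarith [mul_nonneg (mul_nonneg hT (by linarith : (0:ℝ) ≤ m - T)) h3.le]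
    _ ≤ (1 + T) * (Real.exp (m - T) * Real.exp (-m)) := by
        apply mul_le_mul_of_nonneg_left _ (by linarith)
        exact mul_le_mul_of_nonneg_right h1 h3.le
    _ = (1 + T) * Real.exp (-T) := by rw [mul_comm (Real.exp (m - T)), h2]

lemma aux_pair_dist (r r' θ θ' : ℝ) (hr : 0 < r) (hr' : 0 < r') :
    ‖((r * Real.cos θ, r * Real.sin θ) : ℝ × ℝ) - (r' * Real.cos θ', r' * Real.sin θ')‖ ≤
      max r r' * (|Real.log r - Real.log r'| + |θ - θ'|) := by
  set M := max r r' with hM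
  have hM0 : 0 < M := lt_max_of_lt_left hr
  have hrM : r' ≤ M := le_max_right _ _
  have hrad := aux_radial_bound r r' hr hr'
  have key : ∀ f : ℝ → ℝ, (∀ x y, |f x - f y| ≤ |x - y|) → (∀ x, |f x| ≤ 1) →
      |r * f θ - r' * f θ'| ≤ M * (|Real.log r - Real.log r'| + |θ - θ'|) := by
    intro f hf hb
    have e : r * f θ - r' * f θ' = (r - r') * f θ + r' * (f θ - f θ') := by ring
    calc |r * f θ - r' * f θ'| ≤ |r - r'| * |f θ| + r' * |f θ - f θ'| := by
          rw [e]
          refine le_trans (abs_add_le _ _) ?_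
          rw [abs_mul, abs_mul, abs_of_pos hr']
      _ ≤ (M * |Real.log r - Real.log r'|) * 1 + M * |θ - θ'| := by
          apply add_le_add
          · exact mul_le_mul hrad (hb θ) (abs_nonneg _) (by positivity)
          · exact mul_le_mul hrM (hf θ θ') (abs_nonneg _) hM0.le
      _ = M * (|Real.log r - Real.log r'| + |θ - θ'|) := by ring
  rw [Prod.norm_def]
  apply max_le
  · simpa using key Real.cos aux_cos_lip (fun x => abs_cos_le_one x)
  · simpa using key Real.sin aux_sin_lip (fun x => abs_sin_le_one x)

set_option maxHeartbeats 1000000 in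
/-- If `F₀`, `s` are real analytic and `∂F₀/∂H₂(0) ≠ 0`, then the frequency map
`ω = (ω₁, ω₂)` is injective on every small enough slit annulus
`V_* = {H ∈ P : ρ₁ < |H| < ρ₂}`. -/
theorem stmt11 (F₀ s : ℝ × ℝ → ℝ) (hF : ∀ x, AnalyticAt ℝ F₀ x)
    (hs : ∀ x, AnalyticAt ℝ s x) (hb : pd₂ F₀ (0, 0) ≠ 0) :
    ∃ ρ₀ > 0, ∀ ρ₁ ρ₂ : ℝ, 0 < ρ₁ → ρ₁ < ρ₂ → ρ₂ ≤ ρ₀ →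
      Set.InjOn (fun H : ℝ × ℝ => (ω₁ F₀ s H, ω₂ F₀ s H))
        {H ∈ slitP | ρ₁ < nrm H ∧ nrm H < ρ₂} := by
  -- analyticity of the four partials
  have ha : ∀ x, AnalyticAt ℝ (pd₁ F₀) x := aux_pd_analytic F₀ hF (1, 0)
  have hbA : ∀ x, AnalyticAt ℝ (pd₂ F₀) x := aux_pd_analytic F₀ hF (0, 1)
  have hc : ∀ x, AnalyticAt ℝ (pd₁ s) x := aux_pd_analytic s hs (1, 0)
  have hdA : ∀ x, AnalyticAt ℝ (pd₂ s) x := aux_pd_analytic s hs (0, 1)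
  -- Lipschitz constants on the unit ball
  obtain ⟨La, hLa1, hLa⟩ := aux_lip_of_analytic _ ha
  obtain ⟨Lb, hLb1, hLb⟩ := aux_lip_of_analytic _ hbA
  obtain ⟨Lc, hLc1, hLc⟩ := aux_lip_of_analytic _ hc
  obtain ⟨Ld, hLd1, hLd⟩ := aux_lip_of_analytic _ hdA
  set L : ℝ := max (max La Lb) (max Lc Ld) with hLdef
  have hL1 : (1:ℝ) ≤ L := le_trans hLa1 (le_trans (le_max_left _ _) (le_max_left _ _))
  have hL0 : (0:ℝ) < L := lt_of_lt_of_le one_pos hL1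
  have lipa : ∀ x y : ℝ × ℝ, ‖x‖ ≤ 1 → ‖y‖ ≤ 1 → |pd₁ F₀ x - pd₁ F₀ y| ≤ L * ‖x - y‖ :=
    fun x y hx hy => le_trans (hLa x y hx hy) (mul_le_mul_of_nonneg_right
      (le_trans (le_max_left _ _) (le_max_left _ _)) (norm_nonneg _))
  have lipb : ∀ x y : ℝ × ℝ, ‖x‖ ≤ 1 → ‖y‖ ≤ 1 → |pd₂ F₀ x - pd₂ F₀ y| ≤ L * ‖x - y‖ :=
    fun x y hx hy => le_trans (hLb x y hx hy) (mul_le_mul_of_nonneg_right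
      (le_trans (le_max_right _ _) (le_max_left _ _)) (norm_nonneg _))
  have lipc : ∀ x y : ℝ × ℝ, ‖x‖ ≤ 1 → ‖y‖ ≤ 1 → |pd₁ s x - pd₁ s y| ≤ L * ‖x - y‖ :=
    fun x y hx hy => le_trans (hLc x y hx hy) (mul_le_mul_of_nonneg_right
      (le_trans (le_max_left _ _) (le_max_right _ _)) (norm_nonneg _))
  have lipd : ∀ x y : ℝ × ℝ, ‖x‖ ≤ 1 → ‖y‖ ≤ 1 → |pd₂ s x - pd₂ s y| ≤ L * ‖x - y‖ :=
    fun x y hx hy => le_trans (hLd x y hx hy) (mul_le_mul_of_nonneg_right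
      (le_trans (le_max_right _ _) (le_max_right _ _)) (norm_nonneg _))
  -- bound on |pd₂ s| on the unit ball
  obtain ⟨S0, hS0⟩ := (isCompact_closedBall (0 : ℝ × ℝ) 1).exists_bound_of_continuousOn
    ((continuous_iff_continuousAt.2 fun y => (hdA y).continuousAt).continuousOn
      (s := Metric.closedBall 0 1))
  set S : ℝ := max S0 0 with hSdef
  have hS0' : (0:ℝ) ≤ S := le_max_right _ _
  have hS : ∀ x : ℝ × ℝ, ‖x‖ ≤ 1 → |pd₂ s x| ≤ S := by
    intro x hx
    exact le_trans (hS0 x (mem_closedBall_zero_iff.2 hx)) (le_max_left _ _)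
  -- lower bound on |pd₂ F₀| near 0
  set β : ℝ := |pd₂ F₀ (0, 0)| / 2 with hβdef
  have hβ0 : 0 < β := by positivity
  obtain ⟨δ, hδ0, hδ⟩ := Metric.continuousAt_iff.1 (hbA (0, 0)).continuousAt β hβ0
  have hbL : ∀ x : ℝ × ℝ, ‖x‖ < δ → β ≤ |pd₂ F₀ x| := by
    intro x hx
    have h1 : dist x (0, 0) < δ := by
      have : ((0:ℝ), (0:ℝ)) = (0 : ℝ × ℝ) := rfl
      rw [this, dist_zero_right]; exact hx
    have h2 : |pd₂ F₀ x - pd₂ F₀ (0, 0)| < β := by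
      have := hδ h1; rwa [Real.dist_eq] at this
    have h3 : |pd₂ F₀ (0, 0)| - |pd₂ F₀ x| ≤ |pd₂ F₀ x - pd₂ F₀ (0, 0)| := by
      rw [abs_sub_comm]; exact abs_sub_abs_le_abs_sub _ _
    have : |pd₂ F₀ (0,0)| = 2*β := by rw [hβdef]; ring
    linarith
  set K : ℝ := 4 * π * L * ((1 + S) / β + 1) with hKdef
  have hK0 : 0 < K := by
    have := Real.pi_pos
    positivity
  -- choice of T
  have hTex : ∃ T : ℝ, (2 + 2 * π * S ≤ T ∧ Real.exp (-T) ≤ δ) ∧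
      K * ((1 + T) * Real.exp (-T)) < 1 := by
    have h1 : Tendsto (fun T : ℝ => (1 + T) * Real.exp (-T)) atTop (nhds 0) := by
      have h2 := tendsto_pow_mul_exp_neg_atTop_nhds_zero 1
      have h3 := tendsto_pow_mul_exp_neg_atTop_nhds_zero 0
      have h4 : Tendsto (fun T : ℝ => T ^ 0 * Real.exp (-T) + T ^ 1 * Real.exp (-T))
          atTop (nhds (0 + 0)) := h3.add h2
      simp only [pow_zero, pow_one, one_mul, add_zero] at h4
      refine h4.congr (fun T => by ring)
    have h5 : Tendsto (fun T : ℝ => K * ((1 + T) * Real.exp (-T))) atTop (nhds (K * 0)) :=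
      h1.const_mul K
    rw [mul_zero] at h5
    have h6 : ∀ᶠ T in atTop, K * ((1 + T) * Real.exp (-T)) < 1 :=
      h5.eventually_lt_const one_pos
    have h7 : Tendsto (fun T : ℝ => Real.exp (-T)) atTop (nhds 0) := by
      have := tendsto_pow_mul_exp_neg_atTop_nhds_zero 0
      simpa using this
    have h8 : ∀ᶠ T in atTop, Real.exp (-T) < δ := h7.eventually_lt_const hδ0
    have h9 : ∀ᶠ T in atTop, 2 + 2 * π * S ≤ T := eventually_ge_atTop _
    exact (((h9.and (h8.mono fun T h => h.le)).and h6)).exists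
  obtain ⟨T, ⟨hT1, hTδ⟩, hTK⟩ := hTex
  have hT0 : (0:ℝ) ≤ T := by
    have hπ := Real.pi_pos
    have h2πS : (0:ℝ) ≤ 2 * π * S := by positivity
    linarith
  refine ⟨Real.exp (-T), Real.exp_pos _, ?_⟩
  intro ρ₁ ρ₂ hρ₁ h12 h2ρ
  have key : ∀ G : ℝ × ℝ, G ∈ slitP → nrm G < ρ₂ →
      0 < nrm G ∧ G.1 = nrm G * Real.cos (argS G) ∧ G.2 = nrm G * Real.sin (argS G) ∧
      T < -Real.log (nrm G) ∧ ‖G‖ ≤ 1 ∧ β ≤ |pd₂ F₀ G| ∧ pd₂ F₀ G ≠ 0 ∧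
      |pd₂ s G| ≤ S ∧ Dfun s G ≠ 0 ∧
      |Dfun s G| ≤ (1 + S) * (1 + (-Real.log (nrm G))) := by
    intro G hGs hGr
    obtain ⟨hr, hx, hy⟩ := aux_slit_decomp G hGs
    have hπ := Real.pi_pos
    have hrT : nrm G < Real.exp (-T) := lt_of_lt_of_le hGr h2ρ
    have htT : T < -Real.log (nrm G) := by
      have h := Real.log_lt_log hr hrT
      rw [Real.log_exp] at h
      linarith
    have ht0 : 0 < -Real.log (nrm G) := lt_of_le_of_lt hT0 htT
    have hG1 : ‖G‖ ≤ 1 := by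
      have h1 : Real.exp (-T) ≤ 1 := by
        rw [← Real.exp_zero]
        exact Real.exp_le_exp.2 (by linarith)
      exact le_trans (aux_norm_le_nrm G) (by linarith)
    have hGδ : ‖G‖ < δ := lt_of_le_of_lt (aux_norm_le_nrm G) (lt_of_lt_of_le hrT hTδ)
    have hβG : β ≤ |pd₂ F₀ G| := hbL G hGδ
    have hbG0 : pd₂ F₀ G ≠ 0 := by
      intro h
      rw [h, abs_zero] at hβG
      linarith
    have hSG : |pd₂ s G| ≤ S := hS G hG1
    have hDexp : Dfun s G = (1 / (2 * π)) * (Real.log (nrm G) + 1) + pd₂ s G := rfl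
    have hπinv : (0:ℝ) < 1 / (2 * π) := by positivity
    have hDneg : Dfun s G < 0 := by
      rw [hDexp]
      have h1 : pd₂ s G ≤ S := (abs_le.1 hSG).2
      have h2 : (2:ℝ) + 2 * π * S < -Real.log (nrm G) := lt_of_le_of_lt hT1 htT
      have h3 : (1 / (2 * π)) * (2 + 2 * π * S) < (1 / (2 * π)) * (-Real.log (nrm G)) :=
        mul_lt_mul_of_pos_left h2 hπinv
      have h4 : (1 / (2 * π)) * (2 + 2 * π * S) = 2 * (1 / (2 * π)) + S := by
        field_simp
      nlinarith
    have hDub : |Dfun s G| ≤ (1 + S) * (1 + (-Real.log (nrm G))) := by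
      rw [hDexp]
      have h1 : |(1 / (2 * π)) * (Real.log (nrm G) + 1) + pd₂ s G| ≤
          (1 / (2 * π)) * |Real.log (nrm G) + 1| + |pd₂ s G| := by
        refine le_trans (abs_add_le _ _) ?_
        rw [abs_mul, abs_of_pos hπinv]
      have h2 : |Real.log (nrm G) + 1| ≤ 1 + (-Real.log (nrm G)) := by
        rw [abs_le]; constructor <;> linarith
      have hπ1 : 1 / (2 * π) ≤ 1 := by
        rw [div_le_one (by positivity)]
        nlinarith [Real.pi_gt_three]
      have h3 : (1 / (2 * π)) * |Real.log (nrm G) + 1| ≤ 1 + (-Real.log (nrm G)) := by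
        nlinarith [abs_nonneg (Real.log (nrm G) + 1)]
      nlinarith
    exact ⟨hr, hx, hy, htT, hG1, hβG, hbG0, hSG, ne_of_lt hDneg, hDub⟩
  intro H hH H' hH' hfeq
  obtain ⟨hHs, -, hHr2⟩ := hH
  obtain ⟨hHs', -, hHr2'⟩ := hH'
  obtain ⟨hr, hx, hy, htT, hH1, hβH, hbH0, hSH, hDH0, hDub⟩ := key H hHs hHr2
  obtain ⟨hr', hx', hy', htT', hH1', hβH', hbH0', hSH', hDH0', hDub'⟩ := key H' hHs' hHr2'
  simp only [Prod.mk.injEq] at hfeq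
  obtain ⟨hfeq1, hfeq2⟩ := hfeq
  have hπ := Real.pi_pos
  set w := ω₂ F₀ s H with hwdef
  have hwrepr : w = pd₂ F₀ H / Dfun s H := rfl
  have hwrepr' : w = pd₂ F₀ H' / Dfun s H' := hfeq2
  have hw0 : w ≠ 0 := by rw [hwrepr]; exact div_ne_zero hbH0 hDH0
  have hW0 : 0 < |w| := abs_pos.2 hw0
  have hDHeq : Dfun s H = pd₂ F₀ H / w := by
    rw [hwrepr]; field_simp
  have hDHeq' : Dfun s H' = pd₂ F₀ H' / w := by
    rw [hwrepr']; field_simp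
  -- equation for the radial variable
  have heq1 : (1 / (2 * π)) * (Real.log (nrm H) - Real.log (nrm H')) =
      (pd₂ F₀ H - pd₂ F₀ H') / w - (pd₂ s H - pd₂ s H') := by
    have e1 := hDHeq
    have e2 := hDHeq'
    unfold Dfun at e1 e2
    linear_combination e1 - e2
  -- equation for the angular variable
  have hω1H : ω₁ F₀ s H = pd₁ F₀ H - w * ((1 / (2 * π)) * argS H + pd₁ s H) := by
    unfold ω₁
    rw [hDHeq]
    field_simp
  have hω1H' : ω₁ F₀ s H' = pd₁ F₀ H' - w * ((1 / (2 * π)) * argS H' + pd₁ s H') := by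
    unfold ω₁
    rw [hDHeq']
    field_simp
  have hEqθ : w * ((1 / (2 * π)) * (argS H - argS H')) =
      (pd₁ F₀ H - pd₁ F₀ H') - w * (pd₁ s H - pd₁ s H') := by
    have e3 := hfeq1
    rw [hω1H, hω1H'] at e3
    linear_combination -e3
  -- abbreviations
  set N := ‖H - H'‖ with hNdef
  have hN0 : 0 ≤ N := norm_nonneg _
  set m := min (-Real.log (nrm H)) (-Real.log (nrm H')) with hmdef
  have hmT : T < m := lt_min htT htT'
  have hm0 : 0 < m := lt_of_le_of_lt hT0 hmT
  set C := (1 + S) * (1 + m) / β with hCdef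
  have hC0 : 0 < C := by positivity
  have hda := lipa H H' hH1 hH1'
  have hdb := lipb H H' hH1 hH1'
  have hdc := lipc H H' hH1 hH1'
  have hdd := lipd H H' hH1 hH1'
  -- bound on 1/|w|
  have hwinv : 1 / |w| ≤ C := by
    rcases le_total (-Real.log (nrm H)) (-Real.log (nrm H')) with hmc | hmc
    · have hmin : m = -Real.log (nrm H) := min_eq_left hmc
      have habsw : |w| = |pd₂ F₀ H| / |Dfun s H| := by rw [hwrepr, abs_div]
      rw [habsw, one_div_div, hCdef, hmin]
      have ht0 : 0 < -Real.log (nrm H) := lt_of_le_of_lt hT0 htT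
      exact div_le_div₀ (mul_nonneg (by linarith) (by linarith)) hDub hβ0 hβH
    · have hmin : m = -Real.log (nrm H') := min_eq_right hmc
      have habsw : |w| = |pd₂ F₀ H'| / |Dfun s H'| := by rw [hwrepr', abs_div]
      rw [habsw, one_div_div, hCdef, hmin]
      have ht0 : 0 < -Real.log (nrm H') := lt_of_le_of_lt hT0 htT'
      exact div_le_div₀ (mul_nonneg (by linarith) (by linarith)) hDub' hβ0 hβH'
  -- bound for the radial difference
  have hΔ1 : |Real.log (nrm H) - Real.log (nrm H')| ≤ 2 * π * (L * N * C + L * N) := by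
    have h2 : |(1 / (2 * π)) * (Real.log (nrm H) - Real.log (nrm H'))| ≤
        L * N * C + L * N := by
      rw [heq1]
      calc |(pd₂ F₀ H - pd₂ F₀ H') / w - (pd₂ s H - pd₂ s H')|
          = |(pd₂ F₀ H - pd₂ F₀ H') / w + -(pd₂ s H - pd₂ s H')| := by rw [sub_eq_add_neg]
        _ ≤ |(pd₂ F₀ H - pd₂ F₀ H') / w| + |-(pd₂ s H - pd₂ s H')| := abs_add_le _ _
        _ = |pd₂ F₀ H - pd₂ F₀ H'| * (1 / |w|) + |pd₂ s H - pd₂ s H'| := by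
            rw [abs_neg, abs_div, div_eq_mul_one_div]
        _ ≤ (L * N) * C + L * N := by
            refine add_le_add (mul_le_mul hdb hwinv (by positivity) (by positivity)) hdd
    have h1 : (1 / (2 * π)) * |Real.log (nrm H) - Real.log (nrm H')| ≤ L * N * C + L * N := by
      rw [← abs_of_pos (show (0:ℝ) < 1 / (2 * π) by positivity), ← abs_mul]
      exact h2
    have h3 : |Real.log (nrm H) - Real.log (nrm H')| =
        2 * π * ((1 / (2 * π)) * |Real.log (nrm H) - Real.log (nrm H')|) := by
      field_simp
    rw [h3]
    exact mul_le_mul_of_nonneg_left h1 (by positivity)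
  -- bound for the angular difference
  have hΔ2 : |argS H - argS H'| ≤ 2 * π * (L * N * C + L * N) := by
    have h4 : |(1 / (2 * π)) * (argS H - argS H')| =
        |(pd₁ F₀ H - pd₁ F₀ H') - w * (pd₁ s H - pd₁ s H')| / |w| := by
      rw [eq_div_iff hW0.ne', ← abs_mul, mul_comm]
      exact congrArg abs hEqθ
    have h5 : |(pd₁ F₀ H - pd₁ F₀ H') - w * (pd₁ s H - pd₁ s H')| / |w| ≤
        |pd₁ F₀ H - pd₁ F₀ H'| / |w| + |pd₁ s H - pd₁ s H'| := by
      rw [div_add' _ _ _ hW0.ne']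
      gcongr
      · calc |(pd₁ F₀ H - pd₁ F₀ H') - w * (pd₁ s H - pd₁ s H')|
            ≤ |pd₁ F₀ H - pd₁ F₀ H'| + |w * (pd₁ s H - pd₁ s H')| := by
              rw [sub_eq_add_neg]
              refine le_trans (abs_add_le _ _) ?_
              rw [abs_neg]
          _ = |pd₁ F₀ H - pd₁ F₀ H'| + |pd₁ s H - pd₁ s H'| * |w| := by
              rw [abs_mul]; ring
    have h6 : |pd₁ F₀ H - pd₁ F₀ H'| / |w| + |pd₁ s H - pd₁ s H'| ≤
        L * N * C + L * N := by
      refine add_le_add ?_ hdc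
      rw [div_eq_mul_one_div]
      exact mul_le_mul hda hwinv (by positivity) (by positivity)
    have h1 : (1 / (2 * π)) * |argS H - argS H'| ≤ L * N * C + L * N := by
      rw [← abs_of_pos (show (0:ℝ) < 1 / (2 * π) by positivity), ← abs_mul]
      exact le_trans (le_of_eq h4) (le_trans h5 h6)
    have h3 : |argS H - argS H'| = 2 * π * ((1 / (2 * π)) * |argS H - argS H'|) := by
      field_simp
    rw [h3]
    exact mul_le_mul_of_nonneg_left h1 (by positivity)
  -- geometric bound
  set Δ := |Real.log (nrm H) - Real.log (nrm H')| + |argS H - argS H'| with hΔdef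
  have hΔ0 : 0 ≤ Δ := by positivity
  have hN : N ≤ Real.exp (-m) * Δ := by
    have hHp : H = ((nrm H * Real.cos (argS H), nrm H * Real.sin (argS H)) : ℝ × ℝ) :=
      Prod.ext_iff.2 ⟨hx, hy⟩
    have hHp' : H' = ((nrm H' * Real.cos (argS H'), nrm H' * Real.sin (argS H')) : ℝ × ℝ) :=
      Prod.ext_iff.2 ⟨hx', hy'⟩
    have hmax : max (nrm H) (nrm H') = Real.exp (-m) := by
      have e1 : nrm H = Real.exp (-(-Real.log (nrm H))) := by
        rw [neg_neg, Real.exp_log hr]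
      have e2 : nrm H' = Real.exp (-(-Real.log (nrm H'))) := by
        rw [neg_neg, Real.exp_log hr']
      rw [e1, e2, hmdef]
      rcases le_total (-Real.log (nrm H)) (-Real.log (nrm H')) with hmc | hmc
      · rw [min_eq_left hmc, max_eq_left (Real.exp_le_exp.2 (by linarith))]
      · rw [min_eq_right hmc, max_eq_right (Real.exp_le_exp.2 (by linarith))]
    calc N = ‖((nrm H * Real.cos (argS H), nrm H * Real.sin (argS H)) : ℝ × ℝ) -
        (nrm H' * Real.cos (argS H'), nrm H' * Real.sin (argS H'))‖ := by
          rw [hNdef, ← hHp, ← hHp']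
      _ ≤ max (nrm H) (nrm H') *
          (|Real.log (nrm H) - Real.log (nrm H')| + |argS H - argS H'|) :=
            aux_pair_dist _ _ _ _ hr hr'
      _ = Real.exp (-m) * Δ := by rw [hmax]
  -- contraction
  have hstep : Δ ≤ K * ((1 + T) * Real.exp (-T)) * Δ := by
    have h5 : Δ ≤ (4 * π * L * (C + 1)) * N := by
      rw [hΔdef]
      calc |Real.log (nrm H) - Real.log (nrm H')| + |argS H - argS H'|
          ≤ 2 * π * (L * N * C + L * N) + 2 * π * (L * N * C + L * N) := add_le_add hΔ1 hΔ2
        _ = (4 * π * L * (C + 1)) * N := by ring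
    have h6 : 4 * π * L * (C + 1) ≤ K * (1 + m) := by
      rw [hKdef, hCdef]
      have hid : 4 * π * L * ((1 + S) / β + 1) * (1 + m) - 4 * π * L * ((1 + S) * (1 + m) / β + 1)
          = 4 * π * L * m := by field_simp; ring
      have hpos : 0 ≤ 4 * π * L * m := by positivity
      linarith
    have h7 : Δ ≤ K * (1 + m) * N :=
      le_trans h5 (mul_le_mul_of_nonneg_right h6 hN0)
    have h8 : Δ ≤ K * (1 + m) * (Real.exp (-m) * Δ) := by
      refine le_trans h7 (mul_le_mul_of_nonneg_left hN ?_)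
      have : 0 < K := by rw [hKdef]; positivity
      positivity
    have hmd := aux_mono_decay T m hT0 hmT.le
    have hK0 : (0:ℝ) < K := by rw [hKdef]; positivity
    calc Δ ≤ K * (1 + m) * (Real.exp (-m) * Δ) := h8
      _ = K * ((1 + m) * Real.exp (-m)) * Δ := by ring
      _ ≤ K * ((1 + T) * Real.exp (-T)) * Δ :=
          mul_le_mul_of_nonneg_right (mul_le_mul_of_nonneg_left hmd hK0.le) hΔ0
  have hΔzero : Δ = 0 := by
    by_contra hne
    have hΔpos : 0 < Δ := lt_of_le_of_ne hΔ0 (Ne.symm hne)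
    have hqd := mul_lt_mul_of_pos_right hTK hΔpos
    rw [one_mul] at hqd
    linarith
  have hz1 : Real.log (nrm H) = Real.log (nrm H') := by
    have := abs_nonneg (Real.log (nrm H) - Real.log (nrm H'))
    have := abs_nonneg (argS H - argS H')
    have h : |Real.log (nrm H) - Real.log (nrm H')| = 0 := by
      rw [hΔdef] at hΔzero; linarith
    have := abs_eq_zero.1 h
    linarith [sub_eq_zero.1 this]
  have hz2 : argS H = argS H' := by
    have := abs_nonneg (Real.log (nrm H) - Real.log (nrm H'))
    have := abs_nonneg (argS H - argS H')
    have h : |argS H - argS H'| = 0 := by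
      rw [hΔdef] at hΔzero; linarith
    exact sub_eq_zero.1 (abs_eq_zero.1 h)
  have hrr : nrm H = nrm H' := by
    rw [← Real.exp_log hr, ← Real.exp_log hr', hz1]
  refine Prod.ext_iff.2 ⟨?_, ?_⟩
  · rw [hx, hx', hrr, hz2]
  · rw [hy, hy', hrr, hz2]
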